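/- arXiv:1906.02309 — 4 statements merged into one kernel-verified Lean document; each statement's English description precedes it below -/
import Mathlib

section
/- For any k ≥ 1 and real numbers x₁, …, x_k, the sum over all sign vectors λ ∈ {0,1}^k of max(∑_{j=1}^k (-1)^{λ_j} x_j, 0) is at least 2^{k-1} · max_j |x_j|. -/
theorem stmt_1 (k : ℕ) (hk : 1 ≤ k) (x : Fin k → ℝ) :
    (∑ l : Fin k → Bool, max (∑ j, (if l j then (-1 : ℝ) else 1) * x j) 0) ≥
      2 ^ (k - 1) *
        (Finset.univ.sup' (⟨⟨0, hk⟩, Finset.mem_univ _⟩) fun j => |x j|) := by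
  obtain ⟨j0, -, hj0⟩ := Finset.exists_mem_eq_sup'
    (⟨⟨0, hk⟩, Finset.mem_univ _⟩ : (Finset.univ : Finset (Fin k)).Nonempty)
    (fun j => |x j|)
  rw [hj0]
  set S : (Fin k → Bool) → ℝ := fun l => ∑ j, (if l j then (-1 : ℝ) else 1) * x j with hS
  show (∑ l : Fin k → Bool, max (S l) 0) ≥ 2 ^ (k - 1) * |x j0|
  have hneg : ∀ l, S (fun j => !l j) = -S l := by
    intro l
    simp only [hS, ← Finset.sum_neg_distrib]
    refine Finset.sum_congr rfl fun j _ => ?_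
    rcases Bool.eq_false_or_eq_true (l j) with h | h <;> simp [h]
  have habs : ∀ l : Fin k → Bool, max (S l) 0 + max (S fun j => !l j) 0 = |S l| := by
    intro l
    rw [hneg]
    rcases le_total (S l) 0 with h | h
    · rw [abs_of_nonpos h, max_eq_right h, max_eq_left (by linarith), zero_add]
    · rw [abs_of_nonneg h, max_eq_left h, max_eq_right (by linarith), add_zero]
  have e1 : ∑ l : Fin k → Bool, max (S fun j => !l j) 0
      = ∑ l : Fin k → Bool, max (S l) 0 := by
    apply Fintype.sum_bijective (fun l j => !l j)
    · exact Function.Involutive.bijective (fun l => by funext j; simp)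
    · intro l; rfl
  have h2 : 2 * ∑ l : Fin k → Bool, max (S l) 0 = ∑ l : Fin k → Bool, |S l| := by
    rw [two_mul]
    nth_rewrite 2 [← e1]
    rw [← Finset.sum_add_distrib]
    exact Finset.sum_congr rfl fun l _ => habs l
  set flip : (Fin k → Bool) → (Fin k → Bool) := fun l => Function.update l j0 (!l j0)
    with hflip
  have hflipinv : Function.Involutive flip := by
    intro l; funext j
    by_cases h : j = j0
    · subst h; simp [hflip]
    · simp [hflip, Function.update_of_ne h]
  have e2 : ∑ l : Fin k → Bool, |S (flip l)| = ∑ l : Fin k → Bool, |S l| := by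
    apply Fintype.sum_bijective flip hflipinv.bijective
    intro l; rfl
  have hdiff : ∀ l, |S l| + |S (flip l)| ≥ 2 * |x j0| := by
    intro l
    have key : S l - S (flip l) = (if l j0 then (-2:ℝ) else 2) * x j0 := by
      rw [hS]
      simp only [← Finset.sum_sub_distrib]
      rw [Finset.sum_eq_single j0]
      · have : flip l j0 = !l j0 := by simp [hflip]
        rw [this]
        cases l j0 <;> simp <;> ring
      · intro j _ hj
        have : flip l j = l j := by simp [hflip, Function.update_of_ne hj]
        rw [this]; ring
      · intro h; exact absurd (Finset.mem_univ j0) h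
    have h1 : |S l - S (flip l)| = 2 * |x j0| := by
      rw [key, abs_mul]
      cases l j0 <;> simp
    calc |S l| + |S (flip l)| ≥ |S l - S (flip l)| := abs_sub _ _
      _ = 2 * |x j0| := h1
  have h3 : ∑ l : Fin k → Bool, (|S l| + |S (flip l)|)
      ≥ ∑ _l : Fin k → Bool, 2 * |x j0| :=
    Finset.sum_le_sum fun l _ => hdiff l
  rw [Finset.sum_add_distrib, e2, Finset.sum_const] at h3
  have hcard : (Finset.univ : Finset (Fin k → Bool)).card = 2 ^ k := by
    simp [Fintype.card_fun]
  rw [hcard] at h3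
  have hk2 : (2:ℝ) ^ k = 2 * 2 ^ (k - 1) := by
    rw [← pow_succ']
    congr 1
    omega
  have hcast : ((2 ^ k : ℕ) : ℝ) = (2:ℝ) ^ k := by push_cast; ring
  rw [nsmul_eq_mul, hcast] at h3
  rw [hk2] at h3
  nlinarith [h3, h2]
end

section
/- For any p ≥ 1, k ≥ 1, and real numbers x₁, …, x_k, the sum over all λ ∈ {0,1}^k of max(∑_{j=1}^k (-1)^{λ_j} x_j, 0)^p is at least ∑_{j=1}^k |x_j|^p. -/
open Finset

private lemma two_mul_le_two_pow' (k : ℕ) (hk : 1 ≤ k) : 2 * k ≤ 2 ^ k := by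
  induction k with
  | zero => omega
  | succ n ih =>
    rcases Nat.lt_or_ge n 1 with h | h
    · have : n = 0 := by omega
      subst this; norm_num
    · have h1 := ih h
      have h2 : 2 ≤ 2 ^ n := by
        calc 2 = 2 ^ 1 := by norm_num
        _ ≤ 2 ^ n := Nat.pow_le_pow_right (by norm_num) h
      have h3 : 2 ^ (n + 1) = 2 * 2 ^ n := by rw [pow_succ]; ring
      omega

private lemma conv2' {p : ℝ} (hp : 1 ≤ p) {a b : ℝ} (ha : 0 ≤ a) (hb : 0 ≤ b) :
    2 * ((a + b) / 2) ^ p ≤ a ^ p + b ^ p := by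
  have h := (convexOn_rpow hp).2 (Set.mem_Ici.2 ha) (Set.mem_Ici.2 hb)
    (by norm_num : (0:ℝ) ≤ 1/2) (by norm_num : (0:ℝ) ≤ 1/2) (by norm_num)
  simp only [smul_eq_mul] at h
  have he : (a + b) / 2 = 1/2 * a + 1/2 * b := by ring
  rw [he]
  linarith

private lemma pair_bound' {p : ℝ} (hp : 1 ≤ p) {a b c : ℝ} (h : |a - b| = 2 * |c|) :
    2 * |c| ^ p ≤ |a| ^ p + |b| ^ p := by
  have h2 : |a - b| ≤ |a| + |b| := by
    calc |a - b| = |a + -b| := by rw [sub_eq_add_neg]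
    _ ≤ |a| + |-b| := abs_add_le _ _
    _ = |a| + |b| := by rw [abs_neg]
  have hc : |c| ≤ (|a| + |b|) / 2 := by rw [h] at h2; linarith
  calc 2 * |c| ^ p ≤ 2 * ((|a| + |b|) / 2) ^ p := by
        have := Real.rpow_le_rpow (abs_nonneg c) hc (by linarith : (0:ℝ) ≤ p)
        linarith
  _ ≤ |a| ^ p + |b| ^ p := conv2' hp (abs_nonneg a) (abs_nonneg b)

theorem stmt_3 (p : ℝ) (hp : 1 ≤ p) (k : ℕ) (hk : 1 ≤ k) (x : Fin k → ℝ) :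
    (∑ l : Fin k → Bool, max (∑ j, (if l j then (-1 : ℝ) else 1) * x j) 0 ^ p) ≥
      ∑ j, |x j| ^ p := by
  set S : (Fin k → Bool) → ℝ := fun l => ∑ j, (if l j then (-1 : ℝ) else 1) * x j with hS
  set T : ℝ := ∑ l : Fin k → Bool, max (S l) 0 ^ p with hT
  have hp0 : p ≠ 0 := by intro h; rw [h] at hp; norm_num at hp
  -- complement bijection
  have hnot : Function.Bijective (fun l : Fin k → Bool => fun i => !(l i)) := by
    apply Function.Involutive.bijective
    intro l; funext i; simp
  have hSneg : ∀ l : Fin k → Bool, S (fun i => !(l i)) = -S l := by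
    intro l
    rw [hS, ← Finset.sum_neg_distrib]
    refine Finset.sum_congr rfl fun j _ => ?_
    cases hl : l j <;> simp only [hl, Bool.not_false, Bool.not_true] <;> norm_num
  have key0 : ∀ a : ℝ, max a 0 ^ p + max (-a) 0 ^ p = |a| ^ p := by
    intro a
    rcases le_total a 0 with h | h
    · rw [max_eq_right h, max_eq_left (by linarith : (0:ℝ) ≤ -a),
        Real.zero_rpow hp0, abs_of_nonpos h]
      ring
    · rw [max_eq_left h, max_eq_right (by linarith : -a ≤ (0:ℝ)),
        Real.zero_rpow hp0, abs_of_nonneg h]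
      ring
  -- Step A : 2 * T = ∑ |S l| ^ p
  have h1 : ∑ l : Fin k → Bool, max (-(S l)) 0 ^ p = T := by
    calc ∑ l : Fin k → Bool, max (-(S l)) 0 ^ p
        = ∑ l : Fin k → Bool, max (S (fun i => !(l i))) 0 ^ p := by
          refine Finset.sum_congr rfl fun l _ => by rw [hSneg]
    _ = ∑ l : Fin k → Bool, max (S l) 0 ^ p :=
          Function.Bijective.sum_comp hnot (fun l => max (S l) 0 ^ p)
    _ = T := hT.symm
  have hA : 2 * T = ∑ l : Fin k → Bool, |S l| ^ p := by
    calc 2 * T = T + ∑ l : Fin k → Bool, max (-(S l)) 0 ^ p := by rw [h1]; ring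
    _ = ∑ l : Fin k → Bool, (max (S l) 0 ^ p + max (-(S l)) 0 ^ p) := by
        rw [hT, ← Finset.sum_add_distrib]
    _ = ∑ l : Fin k → Bool, |S l| ^ p := Finset.sum_congr rfl fun l _ => key0 _
  -- Step B : for each j, 2^k * |x j|^p ≤ ∑ |S l|^p
  have hB : ∀ j : Fin k, (2 ^ k : ℝ) * |x j| ^ p ≤ ∑ l : Fin k → Bool, |S l| ^ p := by
    intro j
    set flip : (Fin k → Bool) → (Fin k → Bool) :=
      fun l => Function.update l j (!(l j)) with hflip
    have hflipinv : Function.Involutive flip := by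
      intro l; funext i
      by_cases hij : i = j
      · subst hij; simp [hflip]
      · simp [hflip, Function.update_of_ne hij]
    have hflipbij : Function.Bijective flip := hflipinv.bijective
    have hdiff : ∀ l : Fin k → Bool, |S l - S (flip l)| = 2 * |x j| := by
      intro l
      have : S l - S (flip l) = (if l j then (-1 : ℝ) else 1) * (2 * x j) := by
        rw [hS, ← Finset.sum_sub_distrib]
        rw [Finset.sum_eq_single j]
        · by_cases hl : l j <;> simp [hflip, hl] <;> ring
        · intro i _ hij
          have : flip l i = l i := Function.update_of_ne hij _ _
          rw [this]; ring
        · intro h; exact absurd (Finset.mem_univ j) h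
      rw [this, abs_mul, abs_mul]
      by_cases hl : l j <;> simp [hl, abs_of_nonneg]
    have hpair : ∀ l : Fin k → Bool, 2 * |x j| ^ p ≤ |S l| ^ p + |S (flip l)| ^ p :=
      fun l => pair_bound' hp (hdiff l)
    have hsum2 : ∑ l : Fin k → Bool, |S (flip l)| ^ p = ∑ l : Fin k → Bool, |S l| ^ p :=
      Function.Bijective.sum_comp hflipbij (fun l => |S l| ^ p)
    have hcard : (Finset.univ : Finset (Fin k → Bool)).card = 2 ^ k := by
      simp [Finset.card_univ]
    have := Finset.sum_le_sum (fun l (_ : l ∈ (Finset.univ : Finset (Fin k → Bool))) => hpair l)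
    rw [Finset.sum_const, hcard, Finset.sum_add_distrib, hsum2, nsmul_eq_mul] at this
    push_cast at this ⊢
    linarith
  -- Step C : conclude
  have hTnn : 0 ≤ T :=
    Finset.sum_nonneg fun l _ => Real.rpow_nonneg (le_max_right _ _) p
  have h2k : (0:ℝ) < 2 ^ k := by positivity
  have hkk : (2 * k : ℝ) ≤ 2 ^ k := by
    have := two_mul_le_two_pow' k hk
    exact_mod_cast this
  have hxj : ∀ j : Fin k, |x j| ^ p ≤ 2 * T / 2 ^ k := by
    intro j
    have h := hB j
    rw [← hA] at h
    rw [le_div_iff₀ h2k]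
    linarith
  have hfin : ∑ j, |x j| ^ p ≤ T := by
    calc ∑ j, |x j| ^ p ≤ ∑ _j : Fin k, (2 * T / 2 ^ k) :=
          Finset.sum_le_sum fun j _ => hxj j
    _ = k * (2 * T / 2 ^ k) := by
        rw [Finset.sum_const, Finset.card_univ, Fintype.card_fin, nsmul_eq_mul]
    _ = (2 * k * T) / 2 ^ k := by ring
    _ ≤ (2 ^ k * T) / 2 ^ k := by
        have hmul : 2 * (k : ℝ) * T ≤ 2 ^ k * T := mul_le_mul_of_nonneg_right hkk hTnn
        exact (div_le_div_iff_of_pos_right h2k).mpr hmul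
    _ = T := by field_simp
  exact hfin
end

section
/- Let θᵢ, θⱼ ∈ [-π/2, π/2] have the same sign (θᵢ·θⱼ ≥ 0), and let C ≥ 1 and d > 0 satisfy C/d ≥ 1. Then max(C·sin θᵢ·sin θⱼ + cos θᵢ·cos θⱼ, 0) + (1/d)·(|C·sin θᵢ·cos θⱼ − cos θᵢ·sin θⱼ| + |C·sin θⱼ·cos θᵢ − cos θⱼ·sin θᵢ|) ≥ 1. -/
theorem stmt_4 (θi θj C d : ℝ)
    (hi : θi ∈ Set.Icc (-(Real.pi / 2)) (Real.pi / 2))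
    (hj : θj ∈ Set.Icc (-(Real.pi / 2)) (Real.pi / 2))
    (hsign : θi * θj ≥ 0) (hC : 1 ≤ C) (hd : 0 < d) (hCd : 1 ≤ C / d) :
    max (C * Real.sin θi * Real.sin θj + Real.cos θi * Real.cos θj) 0 +
      (1 / d) * (|C * Real.sin θi * Real.cos θj - Real.cos θi * Real.sin θj| +
        |C * Real.sin θj * Real.cos θi - Real.cos θj * Real.sin θi|) ≥ 1 := by
  obtain ⟨hi1, hi2⟩ := hi
  obtain ⟨hj1, hj2⟩ := hj
  have hci : 0 ≤ Real.cos θi := Real.cos_nonneg_of_mem_Icc ⟨hi1, hi2⟩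
  have hcj : 0 ≤ Real.cos θj := Real.cos_nonneg_of_mem_Icc ⟨hj1, hj2⟩
  -- sin θi * sin θj ≥ 0
  have hss : 0 ≤ Real.sin θi * Real.sin θj := by
    rcases mul_nonneg_iff.mp hsign with ⟨h1, h2⟩ | ⟨h1, h2⟩
    · exact mul_nonneg (Real.sin_nonneg_of_nonneg_of_le_pi h1 (by linarith [Real.pi_pos]))
        (Real.sin_nonneg_of_nonneg_of_le_pi h2 (by linarith [Real.pi_pos]))
    · have : 0 ≤ Real.sin (-θi) * Real.sin (-θj) :=
        mul_nonneg (Real.sin_nonneg_of_nonneg_of_le_pi (by linarith) (by linarith [Real.pi_pos]))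
          (Real.sin_nonneg_of_nonneg_of_le_pi (by linarith) (by linarith [Real.pi_pos]))
      simpa using this
  set Δ := θi - θj with hΔ
  have hcosΔ : Real.cos Δ = Real.cos θi * Real.cos θj + Real.sin θi * Real.sin θj :=
    Real.cos_sub θi θj
  have hsinΔ : Real.sin Δ = Real.sin θi * Real.cos θj - Real.cos θi * Real.sin θj :=
    Real.sin_sub θi θj
  -- cos Δ ≥ 0
  have hcΔ : 0 ≤ Real.cos Δ := by
    rcases mul_nonneg_iff.mp hsign with ⟨h1, h2⟩ | ⟨h1, h2⟩ <;>
      exact Real.cos_nonneg_of_mem_Icc ⟨by simp [hΔ]; linarith, by simp [hΔ]; linarith⟩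
  -- max term ≥ cos Δ
  have h1 : max (C * Real.sin θi * Real.sin θj + Real.cos θi * Real.cos θj) 0
      ≥ Real.cos Δ := by
    have : C * Real.sin θi * Real.sin θj + Real.cos θi * Real.cos θj ≥ Real.cos Δ := by
      rw [hcosΔ]; nlinarith
    exact le_trans this (le_max_left _ _)
  -- abs sum ≥ C * |sin Δ|
  have h2 : |C * Real.sin θi * Real.cos θj - Real.cos θi * Real.sin θj| +
      |C * Real.sin θj * Real.cos θi - Real.cos θj * Real.sin θi| ≥ C * |Real.sin Δ| := by
    have key : (C * Real.sin θi * Real.cos θj - Real.cos θi * Real.sin θj) -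
        (C * Real.sin θj * Real.cos θi - Real.cos θj * Real.sin θi) = (C + 1) * Real.sin Δ := by
      rw [hsinΔ]; ring
    calc |C * Real.sin θi * Real.cos θj - Real.cos θi * Real.sin θj| +
        |C * Real.sin θj * Real.cos θi - Real.cos θj * Real.sin θi|
        ≥ |(C * Real.sin θi * Real.cos θj - Real.cos θi * Real.sin θj) -
          (C * Real.sin θj * Real.cos θi - Real.cos θj * Real.sin θi)| := abs_sub _ _
      _ = (C + 1) * |Real.sin Δ| := by
          rw [key, abs_mul, abs_of_nonneg (by linarith : (0:ℝ) ≤ C + 1)]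
      _ ≥ C * |Real.sin Δ| := by nlinarith [abs_nonneg (Real.sin Δ)]
  -- (1/d) * C ≥ 1
  have h3 : (1 / d) * (C * |Real.sin Δ|) ≥ |Real.sin Δ| := by
    have : C / d ≥ 1 := hCd
    have habs : 0 ≤ |Real.sin Δ| := abs_nonneg _
    have : C / d * |Real.sin Δ| ≥ 1 * |Real.sin Δ| := by
      exact mul_le_mul_of_nonneg_right this habs
    calc (1 / d) * (C * |Real.sin Δ|) = (C / d) * |Real.sin Δ| := by ring
      _ ≥ 1 * |Real.sin Δ| := this
      _ = |Real.sin Δ| := one_mul _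
  -- cos Δ + |sin Δ| ≥ 1
  have h4 : Real.cos Δ + |Real.sin Δ| ≥ 1 := by
    have hs1 : |Real.sin Δ| ≤ 1 := abs_le.mpr ⟨Real.neg_one_le_sin Δ, Real.sin_le_one Δ⟩
    nlinarith [Real.sin_sq_add_cos_sq Δ, Real.cos_le_one Δ,
      abs_nonneg (Real.sin Δ), sq_abs (Real.sin Δ)]
  have h5 : (1 / d) * (|C * Real.sin θi * Real.cos θj - Real.cos θi * Real.sin θj| +
        |C * Real.sin θj * Real.cos θi - Real.cos θj * Real.sin θi|) ≥ |Real.sin Δ| := by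
    have hd' : 0 < 1 / d := by positivity
    calc (1/d) * _ ≥ (1/d) * (C * |Real.sin Δ|) := by
          exact mul_le_mul_of_nonneg_left h2 (le_of_lt hd')
      _ ≥ |Real.sin Δ| := h3
  linarith
end

section
/- For C ≥ 1 and θᵢ, θⱼ ∈ [0, π/2] with θᵢ + θⱼ ≤ π/2, we have max(−C·sin θᵢ·sin θⱼ + cos θᵢ·cos θⱼ, 0) + ((C+1)/(2√C))·sin(θᵢ + θⱼ) ≥ 1. -/
theorem stmt_12 (C θi θj : ℝ) (hC : 1 ≤ C)
    (hi0 : 0 ≤ θi) (hi : θi ≤ Real.pi / 2) (hj0 : 0 ≤ θj) (hj : θj ≤ Real.pi / 2)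
    (hsum : θi + θj ≤ Real.pi / 2) :
    max (-C * Real.sin θi * Real.sin θj + Real.cos θi * Real.cos θj) 0 +
      (C + 1) / (2 * Real.sqrt C) * Real.sin (θi + θj) ≥ 1 := by
  set s := Real.sqrt C with hsdef
  have hs0 : 0 < s := Real.sqrt_pos.mpr (by linarith)
  have hs2 : s ^ 2 = C := Real.sq_sqrt (by linarith)
  set α := θi + θj with hα
  have hα0 : 0 ≤ α := by positivity
  have hsin : 0 ≤ Real.sin α := Real.sin_nonneg_of_nonneg_of_le_pi hα0
    (by linarith [Real.pi_pos])
  have hcos0 : 0 ≤ Real.cos α := Real.cos_nonneg_of_mem_Icc ⟨by linarith [Real.pi_pos], hsum⟩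
  have hcos1 : Real.cos α ≤ 1 := Real.cos_le_one α
  have hsc : Real.sin α ^ 2 + Real.cos α ^ 2 = 1 := Real.sin_sq_add_cos_sq α
  -- first term lower bound
  have hE : -C * Real.sin θi * Real.sin θj + Real.cos θi * Real.cos θj ≥
      ((C + 1) * Real.cos α - (C - 1)) / 2 := by
    have h1 : Real.cos α = Real.cos θi * Real.cos θj - Real.sin θi * Real.sin θj :=
      Real.cos_add θi θj
    have h2 : Real.cos (θi - θj) = Real.cos θi * Real.cos θj + Real.sin θi * Real.sin θj :=
      Real.cos_sub θi θj
    have h3 : Real.cos (θi - θj) ≤ 1 := Real.cos_le_one _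
    nlinarith
  have hmax1 : max (-C * Real.sin θi * Real.sin θj + Real.cos θi * Real.cos θj) 0 ≥
      ((C + 1) * Real.cos α - (C - 1)) / 2 := le_trans hE (le_max_left _ _)
  have hmax0 : max (-C * Real.sin θi * Real.sin θj + Real.cos θi * Real.cos θj) 0 ≥ 0 :=
    le_max_right _ _
  rcases le_or_gt ((C + 1) * Real.cos α) (C - 1) with h | h
  · -- ε̄ ≤ 0 : second term alone ≥ 1
    have hh : ((C + 1) * Real.cos α) ^ 2 ≤ (C - 1) ^ 2 := by
      nlinarith [mul_nonneg (by linarith : (0:ℝ) ≤ C + 1) hcos0]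
    have hA : (2 * s) ^ 2 ≤ ((C + 1) * Real.sin α) ^ 2 := by
      nlinarith [hh, hsc, sq_nonneg (C + 1)]
    have hkey : 2 * s ≤ (C + 1) * Real.sin α :=
      (pow_le_pow_iff_left₀ (by positivity)
        (mul_nonneg (by linarith : (0:ℝ) ≤ C + 1) hsin) two_ne_zero).mp hA
    have : (1 : ℝ) ≤ (C + 1) / (2 * s) * Real.sin α := by
      rw [div_mul_eq_mul_div, le_div_iff₀ (by positivity)]
      linarith
    linarith
  · -- ε̄ ≥ 0
    have hkey : s * (1 - Real.cos α) ≤ Real.sin α := by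
      nlinarith [sq_nonneg (Real.sin α - s * (1 - Real.cos α)),
        mul_nonneg hsin (mul_nonneg hs0.le (by linarith : (0:ℝ) ≤ 1 - Real.cos α))]
    have h2 : (1 - ((C + 1) * Real.cos α - (C - 1)) / 2) ≤ (C + 1) / (2 * s) * Real.sin α := by
      rw [div_mul_eq_mul_div, le_div_iff₀ (by positivity)]
      nlinarith [mul_le_mul_of_nonneg_left hkey (by linarith : (0:ℝ) ≤ C + 1)]
    linarith
end
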